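/- Let p ≥ 0 and m ≥ 0, and let Ξ_{p,m} be the p-open knot vector consisting of the knot 0 repeated p+1 times, the interior knots 1/2^m, 2/2^m, …, (2^m−1)/2^m (each once), and the knot 1 repeated p+1 times. Then the associated B-spline basis functions {b_j^p}_{j=0}^{2^m+p−1}, restricted to [0,1), are linearly independent over ℝ; consequently the spline space S_p(Ξ_{p,m}) = span{b_j^p : 0 ≤ j ≤ 2^m+p−1} (as a space of functions on [0,1)) has dimension 2^m + p. -/

import Mathlib

/-!
Near `0` the knot vector has `p + 1` coincident knots, and for `j ≤ p` the basis function
`b_j^p(x)` behaves like a positive multiple of `x ^ j` as `x → 0⁺`. For `j ≥ p`, on the nonempty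
interval `(ξ_j, ξ_{j+1})` the function `b_j^p` is positive while every `b_l^p` with `l > j`
vanishes. So the coefficients of a vanishing combination are zero one after another: for `j < p`
by comparing orders of vanishing at `0`, for `j ≥ p` by evaluating between two consecutive knots.
-/

/-- The B-spline basis functions `b_j^p` associated with a knot sequence `ξ`, defined by the
Cox–de Boor recursion, with the convention that any term with zero denominator is zero:
`b_j^0(x) = 1` if `ξ_j ≤ x < ξ_{j+1}` and `0` otherwise, and
`b_j^{p}(x) = (x−ξ_j)/(ξ_{j+p}−ξ_j)·b_j^{p−1}(x) + (ξ_{j+p+1}−x)/(ξ_{j+p+1}−ξ_{j+1})·b_{j+1}^{p−1}(x)`. -/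
noncomputable def bspline (ξ : ℕ → ℝ) : ℕ → ℕ → ℝ → ℝ
  | 0, j, x => if ξ j ≤ x ∧ x < ξ (j + 1) then 1 else 0
  | p + 1, j, x =>
      (if ξ (j + p + 1) = ξ j then 0
        else (x - ξ j) / (ξ (j + p + 1) - ξ j) * bspline ξ p j x) +
      (if ξ (j + p + 2) = ξ (j + 1) then 0
        else (ξ (j + p + 2) - x) / (ξ (j + p + 2) - ξ (j + 1)) * bspline ξ p (j + 1) x)

/-- `ξ` is a `p`-open knot vector with `k` control points: `0 ≤ p ≤ k`, the entries
`ξ_0, …, ξ_{k+p}` are nondecreasing and lie in `[0,1]`, the first `p+1` knots equal `0`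
and the last `p+1` knots equal `1`. -/
def IsOpenKnotVector (ξ : ℕ → ℝ) (p k : ℕ) : Prop :=
  p ≤ k ∧
  (∀ j ≤ p, ξ j = 0) ∧
  (∀ j, k ≤ j → j ≤ k + p → ξ j = 1) ∧
  (∀ i j, i ≤ j → j ≤ k + p → ξ i ≤ ξ j) ∧
  (∀ j ≤ k + p, ξ j ∈ Set.Icc (0 : ℝ) 1)

/-- The uniform `p`-open knot vector `Ξ_{p,m}` on level `m`: the knot `0` repeated `p+1`
times, the interior knots `1/2^m, …, (2^m−1)/2^m`, and the knot `1` repeated `p+1` times;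
as a ℕ-indexed sequence, `ξ_j = clamp_{[0,1]}((j−p)/2^m)`. -/
noncomputable def uniformKnots (p m : ℕ) (j : ℕ) : ℝ :=
  min 1 (max 0 (((j : ℝ) - (p : ℝ)) / 2 ^ m))

open Filter Topology

variable {ξ : ℕ → ℝ}

/-- The guards in the definition of `bspline` are redundant, because `x / 0 = 0`. -/
theorem bspline_succ (ξ : ℕ → ℝ) (q j : ℕ) (x : ℝ) :
    bspline ξ (q + 1) j x =
      (x - ξ j) / (ξ (j + q + 1) - ξ j) * bspline ξ q j x +
        (ξ (j + q + 2) - x) / (ξ (j + q + 2) - ξ (j + 1)) * bspline ξ q (j + 1) x := by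
  rw [bspline]
  congr 1 <;> split_ifs with h <;> simp [h]

theorem bspline_eq_zero_of_lt (hξ : Monotone ξ) {x : ℝ} :
    ∀ {q j : ℕ}, x < ξ j → bspline ξ q j x = 0
  | 0, _, hx => if_neg fun h => (h.1.trans_lt hx).false
  | q + 1, j, hx => by
    rw [bspline_succ, bspline_eq_zero_of_lt hξ hx,
      bspline_eq_zero_of_lt hξ (hx.trans_le (hξ j.le_succ)), mul_zero, mul_zero, add_zero]

theorem bspline_pos (hξ : Monotone ξ) {x : ℝ} :
    ∀ {q j : ℕ}, ξ j < x → x < ξ (j + 1) → 0 < bspline ξ q j x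
  | 0, _, h₁, h₂ => by simp only [bspline, if_pos (And.intro h₁.le h₂), zero_lt_one]
  | q + 1, j, h₁, h₂ => by
    have hA : ξ (j + 1) ≤ ξ (j + q + 1) := hξ (by omega)
    rw [bspline_succ, bspline_eq_zero_of_lt hξ h₂, mul_zero, add_zero]
    exact mul_pos (div_pos (by linarith) (by linarith)) (bspline_pos hξ h₁ h₂)

section NearZero

variable {p : ℕ}

theorem bspline_succ_of_le (hξ : Monotone ξ) (h0 : ∀ i ≤ p, ξ i = 0) (hp : 0 < ξ (p + 1))
    {q j : ℕ} (hj : j ≤ p) (hq : p ≤ j + q + 1) {x : ℝ} (hx : x < ξ (p + 1)) :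
    bspline ξ (q + 1) j x =
      x / ξ (j + q + 1) * bspline ξ q j x + (1 - x / ξ (j + q + 2)) * bspline ξ q (j + 1) x := by
  rw [bspline_succ, h0 j hj, sub_zero, sub_zero]
  congr 1
  rcases hj.lt_or_eq with hj | rfl
  · have hD : 0 < ξ (j + q + 2) := hp.trans_le (hξ (by omega))
    rw [h0 (j + 1) hj, sub_zero, sub_div, div_self hD.ne']
  · rw [bspline_eq_zero_of_lt hξ hx, mul_zero, mul_zero]

theorem exists_tendsto_bspline_div_pow (hξ : Monotone ξ) (h0 : ∀ i ≤ p, ξ i = 0)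
    (hp : 0 < ξ (p + 1)) :
    ∀ {q j e : ℕ}, j ≤ p → j + q = p + e →
      ∃ c > 0, Tendsto (fun x => bspline ξ q j x / x ^ e) (𝓝[>] 0) (𝓝 c) := by
  have hnear : ∀ᶠ x in 𝓝[>] (0 : ℝ), x ∈ Set.Ioo 0 (ξ (p + 1)) := Ioo_mem_nhdsGT hp
  intro q
  induction q with
  | zero =>
    intro j e hj hje
    obtain ⟨rfl, rfl⟩ : j = p ∧ e = 0 := by omega
    refine ⟨1, one_pos, tendsto_const_nhds.congr' ?_⟩
    filter_upwards [hnear] with x hx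
    simp [bspline, h0 j le_rfl, hx.1.le, hx.2]
  | succ q ih =>
    intro j e hj hje
    obtain ⟨a, ha0, hpos_a, ha⟩ : ∃ a ≥ 0, (0 < e → 0 < a) ∧
        Tendsto (fun x => x / ξ (j + q + 1) * bspline ξ q j x / x ^ e) (𝓝[>] 0) (𝓝 a) := by
      rcases e with _ | e
      · refine ⟨0, le_rfl, by simp, tendsto_const_nhds.congr fun x => ?_⟩
        rw [h0 (j + q + 1) (by omega), div_zero, zero_mul, zero_div]
      · obtain ⟨c, hc, hlim⟩ := ih (e := e) hj (by omega)
        have hA : 0 < ξ (j + q + 1) := hp.trans_le (hξ (by omega))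
        refine ⟨c / ξ (j + q + 1), by positivity, fun _ => by positivity, ?_⟩
        refine (hlim.const_mul (ξ (j + q + 1))⁻¹).congr' ?_ |>.trans (by rw [inv_mul_eq_div])
        filter_upwards [hnear] with x hx
        field_simp [hx.1.ne']
        ring
    obtain ⟨b, hb0, hpos_b, hb⟩ : ∃ b ≥ 0, (j < p → 0 < b) ∧
        Tendsto (fun x => (1 - x / ξ (j + q + 2)) * (bspline ξ q (j + 1) x / x ^ e))
          (𝓝[>] 0) (𝓝 b) := by
      rcases hj.lt_or_eq with hj | rfl
      · obtain ⟨c, hc, hlim⟩ := ih (e := e) hj (by omega)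
        refine ⟨c, hc.le, fun _ => hc, ?_⟩
        have h1 : Tendsto (fun x : ℝ => 1 - x / ξ (j + q + 2)) (𝓝[>] 0) (𝓝 1) := by
          have : Continuous fun x : ℝ => 1 - x / ξ (j + q + 2) := by fun_prop
          simpa using (this.tendsto 0).mono_left nhdsWithin_le_nhds
        simpa using h1.mul hlim
      · refine ⟨0, le_rfl, by simp, tendsto_const_nhds.congr' ?_⟩
        filter_upwards [hnear] with x hx
        rw [bspline_eq_zero_of_lt hξ hx.2, zero_div, mul_zero]
    refine ⟨a + b, ?_, (ha.add hb).congr' ?_⟩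
    · rcases e with _ | e
      · linarith [hpos_b (by omega)]
      · linarith [hpos_a e.succ_pos]
    · filter_upwards [hnear] with x hx
      rw [bspline_succ_of_le hξ h0 hp hj (by omega) hx.2]
      ring

theorem tendsto_bspline_div_pow_of_lt (hξ : Monotone ξ) (h0 : ∀ i ≤ p, ξ i = 0)
    (hp : 0 < ξ (p + 1)) {j l : ℕ} (hjl : j < l) :
    Tendsto (fun x => bspline ξ p l x / x ^ j) (𝓝[>] 0) (𝓝 0) := by
  by_cases hl : l ≤ p
  · obtain ⟨c, -, hc⟩ := exists_tendsto_bspline_div_pow hξ h0 hp (q := p) (e := l) hl (add_comm _ _)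
    have hpow : Tendsto (fun x : ℝ => x ^ (l - j)) (𝓝[>] 0) (𝓝 0) :=
      tendsto_nhdsWithin_of_tendsto_nhds ((continuous_pow _).tendsto' 0 0 (zero_pow (by omega)))
    refine (hc.mul hpow).congr' ?_ |>.trans (by rw [mul_zero])
    filter_upwards [self_mem_nhdsWithin] with x (hx : 0 < x)
    rw [← Nat.add_sub_cancel' hjl.le, pow_add, Nat.add_sub_cancel_left]
    field_simp
  · refine tendsto_const_nhds.congr' ?_
    filter_upwards [Ioo_mem_nhdsGT hp] with x hx
    rw [bspline_eq_zero_of_lt hξ (hx.2.trans_le (hξ (by omega))), zero_div]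

end NearZero

section LinearIndependent

variable {p k : ℕ} {g : Fin k → ℝ}

theorem bspline_coeff_eq_zero_of_ge (hξ : Monotone ξ) (h0 : ξ 0 = 0)
    (hs : StrictMonoOn ξ (Set.Icc p k))
    (hsum : ∀ x ∈ Set.Ico 0 (ξ k), ∑ l, g l * bspline ξ p l x = 0) {j : Fin k}
    (hlow : ∀ l < j, g l = 0) (hj : p ≤ j) : g j = 0 := by
  obtain ⟨x, hx₁, hx₂⟩ := exists_between (hs ⟨hj, j.2.le⟩ ⟨by omega, j.2⟩ (lt_add_one (j : ℕ)))
  have hx : x ∈ Set.Ico 0 (ξ k) := ⟨h0 ▸ (hξ (Nat.zero_le j)).trans hx₁.le, hx₂.trans_le (hξ j.2)⟩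
  have hsingle : ∑ l, g l * bspline ξ p l x = g j * bspline ξ p j x := by
    refine Finset.sum_eq_single j (fun l _ hl => ?_) (by simp)
    rcases hl.lt_or_gt with hl | hl
    · rw [hlow l hl, zero_mul]
    · rw [bspline_eq_zero_of_lt hξ (hx₂.trans_le (hξ (Fin.lt_def.mp hl))), mul_zero]
  have := hsum x hx
  rw [hsingle] at this
  exact (mul_eq_zero.mp this).resolve_right (bspline_pos hξ hx₁ hx₂).ne'

theorem bspline_coeff_eq_zero_of_le (hξ : Monotone ξ) (h0 : ∀ i ≤ p, ξ i = 0) (hp : 0 < ξ (p + 1))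
    (hk : 0 < ξ k) (hsum : ∀ x ∈ Set.Ico 0 (ξ k), ∑ l, g l * bspline ξ p l x = 0) {j : Fin k}
    (hlow : ∀ l < j, g l = 0) (hj : (j : ℕ) ≤ p) : g j = 0 := by
  obtain ⟨c, hc, hlim⟩ :=
    exists_tendsto_bspline_div_pow hξ h0 hp (q := p) (e := j) hj (add_comm _ _)
  have hterm : ∀ l : Fin k, Tendsto (fun x => g l * (bspline ξ p l x / x ^ (j : ℕ)))
      (𝓝[>] 0) (𝓝 (if l = j then g j * c else 0)) := by
    intro l
    rcases lt_trichotomy l j with hl | rfl | hl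
    · simp [hlow l hl, hl.ne]
    · simpa using hlim.const_mul (g l)
    · simpa [hl.ne'] using (tendsto_bspline_div_pow_of_lt hξ h0 hp hl).const_mul (g l)
  have hvanish : (fun x => ∑ l, g l * (bspline ξ p l x / x ^ (j : ℕ))) =ᶠ[𝓝[>] 0] fun _ => 0 := by
    filter_upwards [Ioo_mem_nhdsGT hk] with x hx
    simp_rw [← mul_div_assoc, ← Finset.sum_div, hsum x ⟨hx.1.le, hx.2⟩, zero_div]
  have := tendsto_nhds_unique (tendsto_finsetSum _ fun l _ => hterm l)
    (tendsto_const_nhds.congr' hvanish.symm)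
  simpa [hc.ne'] using this

theorem linearIndependent_restrict_bspline (hξ : Monotone ξ) (h0 : ∀ i ≤ p, ξ i = 0)
    (hs : StrictMonoOn ξ (Set.Icc p k)) (hpk : p < k) :
    LinearIndependent ℝ (fun j : Fin k => (Set.Ico 0 (ξ k)).domRestrict (bspline ξ p j)) := by
  have hp : 0 < ξ (p + 1) := h0 p le_rfl ▸ hs ⟨le_rfl, hpk.le⟩ ⟨by omega, hpk⟩ (lt_add_one p)
  have hk : 0 < ξ k := hp.trans_le (hξ hpk)
  rw [Fintype.linearIndependent_iff]
  intro g hg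
  have hsum : ∀ x ∈ Set.Ico 0 (ξ k), ∑ l, g l * bspline ξ p l x = 0 := fun x hx => by
    simpa [Set.domRestrict_apply] using congrFun hg ⟨x, hx⟩
  intro j
  induction j using WellFoundedLT.induction with
  | _ j ih =>
    rcases le_total (j : ℕ) p with hj | hj
    · exact bspline_coeff_eq_zero_of_le hξ h0 hp hk hsum ih hj
    · exact bspline_coeff_eq_zero_of_ge hξ (h0 0 p.zero_le) hs hsum ih hj

end LinearIndependent

section UniformKnots

variable (p m : ℕ)

theorem uniformKnots_monotone : Monotone (uniformKnots p m) := fun i j hij => by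
  unfold uniformKnots
  gcongr

theorem uniformKnots_of_le {j : ℕ} (hj : j ≤ p) : uniformKnots p m j = 0 := by
  have : ((j : ℝ) - p) / 2 ^ m ≤ 0 :=
    div_nonpos_of_nonpos_of_nonneg (by simp [hj]) (by positivity)
  rw [uniformKnots, max_eq_left this, min_eq_right zero_le_one]

theorem uniformKnots_of_mem_Icc {j : ℕ} (hj : j ∈ Set.Icc p (2 ^ m + p)) :
    uniformKnots p m j = ((j : ℝ) - p) / 2 ^ m := by
  have h₁ : (p : ℝ) ≤ j := by exact_mod_cast hj.1
  have h₂ : (j : ℝ) ≤ 2 ^ m + p := by exact_mod_cast hj.2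
  rw [uniformKnots, max_eq_right (by positivity),
    min_eq_right ((div_le_one₀ (by positivity)).2 (by linarith))]

theorem uniformKnots_strictMonoOn : StrictMonoOn (uniformKnots p m) (Set.Icc p (2 ^ m + p)) := by
  intro i hi j hj hij
  rw [uniformKnots_of_mem_Icc p m hi, uniformKnots_of_mem_Icc p m hj]
  gcongr

theorem uniformKnots_two_pow_add : uniformKnots p m (2 ^ m + p) = 1 := by
  rw [uniformKnots_of_mem_Icc p m ⟨Nat.le_add_left p _, le_rfl⟩]
  push_cast
  rw [add_sub_cancel_right, div_self (by positivity)]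

end UniformKnots

/-- The B-spline basis functions of degree `p` on the uniform open knot vector `Ξ_{p,m}`
(`k = 2^m + p` control points), restricted to `[0,1)`, are linearly independent over `ℝ`;
consequently the spline space `S_p(Ξ_{p,m})`, as a space of functions on `[0,1)`, has
dimension `2^m + p`. -/
theorem bspline_linearIndependent_and_dim (p m : ℕ) :
    LinearIndependent ℝ
      (fun j : Fin (2 ^ m + p) =>
        (Set.Ico (0 : ℝ) 1).restrict (bspline (uniformKnots p m) p j)) ∧
    Module.finrank ℝ
      (Submodule.span ℝ (Set.range
        (fun j : Fin (2 ^ m + p) =>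
          (Set.Ico (0 : ℝ) 1).restrict (bspline (uniformKnots p m) p j)))) = 2 ^ m + p := by
  have hli := linearIndependent_restrict_bspline (uniformKnots_monotone p m)
    (fun _ => uniformKnots_of_le p m) (uniformKnots_strictMonoOn p m)
    (by simp : p < 2 ^ m + p)
  rw [uniformKnots_two_pow_add] at hli
  exact ⟨hli, (finrank_span_eq_card hli).trans (Fintype.card_fin _)⟩
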